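/- Let R be an n×p integer matrix and S a p×n integer matrix. Then sgc₂(−R, −S) = sgc₂(R, S) + sgc₂(−Iₙ, −RS) in ℤ/2ℤ, where Iₙ denotes the n×n identity matrix. -/
import Mathlib


/-- The sign-gyration polynomial `sgc₂` of a pair `(R, S)` of rectangular
integer matrices, with values in `ℤ/2ℤ`. -/
def sgc2 {n p : ℕ} (R : Matrix (Fin n) (Fin p) ℤ) (S : Matrix (Fin p) (Fin n) ℤ) : ZMod 2 :=
  (((∑ i : Fin n, ∑ j : Fin n, ∑ k : Fin p, ∑ l : Fin p,
      if i < j ∧ l < k then R i k * S k i * R j l * S l j else 0)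
    + (∑ i : Fin n, ∑ j : Fin n, ∑ k : Fin p, ∑ l : Fin p,
      if i < j ∧ l ≤ k then R i k * S k j * R j l * S l i else 0)
    + (∑ i : Fin n, ∑ k : Fin p, (R i k * (R i k - 1)) / 2 * (S k i) ^ 2) : ℤ) : ZMod 2)

lemma sgc2_neg_neg_aux {n p : ℕ}
    (R : Matrix (Fin n) (Fin p) ℤ) (S : Matrix (Fin p) (Fin n) ℤ) :
    sgc2 (-R) (-S) = sgc2 R S
      + ((∑ i : Fin n, ∑ k : Fin p, R i k * (S k i) ^ 2 : ℤ) : ZMod 2) := by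
  unfold sgc2
  have hA : (∑ i : Fin n, ∑ j : Fin n, ∑ k : Fin p, ∑ l : Fin p,
      if i < j ∧ l < k then (-R) i k * (-S) k i * (-R) j l * (-S) l j else 0)
      = ∑ i : Fin n, ∑ j : Fin n, ∑ k : Fin p, ∑ l : Fin p,
      if i < j ∧ l < k then R i k * S k i * R j l * S l j else 0 := by
    refine Finset.sum_congr rfl fun i _ => Finset.sum_congr rfl fun j _ =>
      Finset.sum_congr rfl fun k _ => Finset.sum_congr rfl fun l _ => ?_
    simp only [Matrix.neg_apply]
    split <;> ring
  have hB : (∑ i : Fin n, ∑ j : Fin n, ∑ k : Fin p, ∑ l : Fin p,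
      if i < j ∧ l ≤ k then (-R) i k * (-S) k j * (-R) j l * (-S) l i else 0)
      = ∑ i : Fin n, ∑ j : Fin n, ∑ k : Fin p, ∑ l : Fin p,
      if i < j ∧ l ≤ k then R i k * S k j * R j l * S l i else 0 := by
    refine Finset.sum_congr rfl fun i _ => Finset.sum_congr rfl fun j _ =>
      Finset.sum_congr rfl fun k _ => Finset.sum_congr rfl fun l _ => ?_
    simp only [Matrix.neg_apply]
    split <;> ring
  have hT : (∑ i : Fin n, ∑ k : Fin p, ((-R) i k * ((-R) i k - 1)) / 2 * ((-S) k i) ^ 2)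
      = (∑ i : Fin n, ∑ k : Fin p, (R i k * (R i k - 1)) / 2 * (S k i) ^ 2)
        + ∑ i : Fin n, ∑ k : Fin p, R i k * (S k i) ^ 2 := by
    rw [← Finset.sum_add_distrib]
    refine Finset.sum_congr rfl fun i _ => ?_
    rw [← Finset.sum_add_distrib]
    refine Finset.sum_congr rfl fun k _ => ?_
    simp only [Matrix.neg_apply]
    have e : -R i k * (-R i k - 1) = R i k * (R i k - 1) + R i k * 2 := by ring
    rw [e, Int.add_mul_ediv_right _ _ (by norm_num : (2:ℤ) ≠ 0)]
    ring
  rw [hA, hB, hT]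
  push_cast
  ring

lemma sgc2_neg_one {n : ℕ} (M : Matrix (Fin n) (Fin n) ℤ) :
    sgc2 (-(1 : Matrix (Fin n) (Fin n) ℤ)) (-M)
      = ((∑ i : Fin n, (M i i) ^ 2 : ℤ) : ZMod 2) := by
  unfold sgc2
  have hA : (∑ i : Fin n, ∑ j : Fin n, ∑ k : Fin n, ∑ l : Fin n,
      if i < j ∧ l < k then
        (-(1 : Matrix (Fin n) (Fin n) ℤ)) i k * (-M) k i
          * (-(1 : Matrix (Fin n) (Fin n) ℤ)) j l * (-M) l j else 0) = 0 := by
    refine Finset.sum_eq_zero fun i _ => Finset.sum_eq_zero fun j _ =>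
      Finset.sum_eq_zero fun k _ => Finset.sum_eq_zero fun l _ => ?_
    simp only [Matrix.neg_apply, Matrix.one_apply]
    split
    · rename_i h
      by_cases hik : i = k
      · by_cases hjl : j = l
        · subst hik; subst hjl
          exact absurd h.2 (not_lt.2 (le_of_lt h.1))
        · simp [hjl]
      · simp [hik]
    · rfl
  have hB : (∑ i : Fin n, ∑ j : Fin n, ∑ k : Fin n, ∑ l : Fin n,
      if i < j ∧ l ≤ k then
        (-(1 : Matrix (Fin n) (Fin n) ℤ)) i k * (-M) k j
          * (-(1 : Matrix (Fin n) (Fin n) ℤ)) j l * (-M) l i else 0) = 0 := by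
    refine Finset.sum_eq_zero fun i _ => Finset.sum_eq_zero fun j _ =>
      Finset.sum_eq_zero fun k _ => Finset.sum_eq_zero fun l _ => ?_
    simp only [Matrix.neg_apply, Matrix.one_apply]
    split
    · rename_i h
      by_cases hik : i = k
      · by_cases hjl : j = l
        · subst hik; subst hjl
          exact absurd h.2 (not_le.2 h.1)
        · simp [hjl]
      · simp [hik]
    · rfl
  have hT : (∑ i : Fin n, ∑ k : Fin n,
      ((-(1 : Matrix (Fin n) (Fin n) ℤ)) i k * ((-(1 : Matrix (Fin n) (Fin n) ℤ)) i k - 1)) / 2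
        * ((-M) k i) ^ 2) = ∑ i : Fin n, (M i i) ^ 2 := by
    refine Finset.sum_congr rfl fun i _ => ?_
    rw [Finset.sum_eq_single i]
    · simp [Matrix.neg_apply, Matrix.one_apply]
    · intro k _ hk
      simp [Matrix.neg_apply, Matrix.one_apply, (Ne.symm hk : ¬ i = k)]
    · intro h; exact absurd (Finset.mem_univ i) h
  rw [hA, hB, hT]
  norm_num

/-- `sgc₂(−R, −S) = sgc₂(R, S) + sgc₂(−Iₙ, −RS)`. -/
theorem sgc2_neg_neg {n p : ℕ}
    (R : Matrix (Fin n) (Fin p) ℤ) (S : Matrix (Fin p) (Fin n) ℤ) :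
    sgc2 (-R) (-S) = sgc2 R S + sgc2 (-(1 : Matrix (Fin n) (Fin n) ℤ)) (-(R * S)) := by
  have hsq : ∀ x : ZMod 2, x ^ 2 = x := by decide
  rw [sgc2_neg_neg_aux, sgc2_neg_one]
  congr 1
  simp only [Matrix.mul_apply]
  push_cast
  simp only [hsq]
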